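/- arXiv:2307.02823 — 5 statements merged into one kernel-verified Lean document; each statement's English description precedes it below -/
import Mathlib

section
/- A monic real cubic polynomial s^3 + a1*s^2 + a2*s + a3 has all its complex roots with strictly negative real part if and only if a1 > 0, a3 > 0, and a1*a2 - a3 > 0. -/
/-!
A real cubic has a real root `r`, so it factors as `(s - r) (s² + b s + c)` with `b, c` real, and
it is stable iff `r < 0` and the quadratic factor is stable, i.e. iff `r < 0`, `b > 0`, `c > 0`.
In terms of the coefficients `a₁ = b - r`, `a₃ = -r c` and `a₁ a₂ - a₃ = b (c - r (b - r))`,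
and these three sign conditions are equivalent to the stated ones.
-/

open Polynomial Complex

def IsHurwitzStable (p : ℂ[X]) : Prop := ∀ z, p.IsRoot z → z.re < 0

lemma isHurwitzStable_mul_iff {p q : ℂ[X]} :
    IsHurwitzStable (p * q) ↔ IsHurwitzStable p ∧ IsHurwitzStable q := by
  simp only [IsHurwitzStable, root_mul, or_imp, forall_and]

lemma isHurwitzStable_X_sub_C_iff (r : ℂ) : IsHurwitzStable (X - C r) ↔ r.re < 0 := by
  simp [IsHurwitzStable, sub_eq_zero]

lemma isHurwitzStable_quadratic_iff (b c : ℝ) :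
    IsHurwitzStable (X ^ 2 + C (b : ℂ) * X + C (c : ℂ)) ↔ 0 < b ∧ 0 < c := by
  simp only [IsHurwitzStable, IsRoot.def, eval_add, eval_mul, eval_pow, eval_C, eval_X]
  constructor
  · intro h
    obtain ⟨s, hs⟩ := IsAlgClosed.exists_eq_mul_self ((b : ℂ) ^ 2 - 4 * c)
    have hz := h ((-b + s) / 2) (by linear_combination -hs / 4)
    have hw := h ((-b - s) / 2) (by linear_combination -hs / 4)
    have hre := congrArg re hs
    simp only [div_ofNat_re, add_re, sub_re, neg_re, ofReal_re, pow_two, mul_re, ofReal_im,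
      mul_zero, sub_zero, re_ofNat, im_ofNat] at hz hw hre
    constructor
    · linarith
    · nlinarith [mul_pos (neg_pos.2 hz) (neg_pos.2 hw), sq_nonneg s.im]
  · rintro ⟨hb, hc⟩ z hz
    have hre := congrArg re hz
    have him := congrArg im hz
    simp only [pow_two, add_re, mul_re, ofReal_re, ofReal_im, zero_mul, sub_zero, zero_re, add_im,
      mul_im, add_zero, zero_im] at hre him
    by_contra! hx
    have him0 : z.im = 0 := by
      have : z.im * (2 * z.re + b) = 0 := by linarith
      exact (mul_eq_zero.1 this).resolve_right (by linarith)
    rw [him0] at hre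
    nlinarith

lemma exists_isRoot_of_odd_natDegree {p : ℝ[X]} (hp : Odd p.natDegree) : ∃ x, p.IsRoot x := by
  wlog hlc : 0 < p.leadingCoeff generalizing p
  · have hp0 : p ≠ 0 := by rintro rfl; simp at hp
    obtain ⟨x, hx⟩ := this (p := -p) (by rwa [natDegree_neg])
      (by simpa using (not_lt.1 hlc).lt_of_ne (leadingCoeff_ne_zero.2 hp0))
    exact ⟨x, by simpa using hx⟩
  have hdeg : 0 < p.degree := natDegree_pos_iff_degree_pos.1 hp.pos
  have htop := p.tendsto_atTop_of_leadingCoeff_nonneg hdeg hlc.le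
  -- the degree being odd, `x ↦ -p(-x)` has the same leading coefficient as `p`
  have hbot : Filter.Tendsto (eval · p) Filter.atBot Filter.atBot := by
    have hneg := (-p.comp (-X)).tendsto_atTop_of_leadingCoeff_nonneg (by simpa using hdeg)
      (by simpa [hp.neg_one_pow] using hlc.le)
    simpa [Function.comp_def] using
      Filter.tendsto_neg_atTop_atBot.comp (hneg.comp Filter.tendsto_neg_atBot_atTop)
  exact p.continuous.surjective htop hbot 0

-- `(X - r) (X² + b X + c)` for a real root `r` of the cubic
lemma exists_cubic_coeffs_eq_of_real_root (a1 a2 a3 : ℝ) :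
    ∃ r b c : ℝ, a1 = b - r ∧ a2 = c - r * b ∧ a3 = -(r * c) := by
  have hdeg : (X ^ 3 + C a1 * X ^ 2 + C a2 * X + C a3).natDegree = 3 := by compute_degree!
  obtain ⟨r, hr⟩ := exists_isRoot_of_odd_natDegree (by rw [hdeg]; decide)
  simp only [IsRoot.def, eval_add, eval_mul, eval_pow, eval_C, eval_X] at hr
  exact ⟨r, a1 + r, r ^ 2 + a1 * r + a2, by ring, by ring, by linear_combination hr⟩

lemma X_sub_C_mul_quadratic {R : Type*} [CommRing R] (r b c : R) :
    (X - C r) * (X ^ 2 + C b * X + C c) =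
      X ^ 3 + C (b - r) * X ^ 2 + C (c - r * b) * X + C (-(r * c)) := by
  simp only [map_sub, map_mul, map_neg]
  ring

lemma cubic_hurwitz_conditions_iff (r b c : ℝ) :
    (r < 0 ∧ 0 < b ∧ 0 < c) ↔
      (0 < b - r ∧ 0 < -(r * c) ∧ 0 < (b - r) * (c - r * b) - -(r * c)) := by
  have hdet : (b - r) * (c - r * b) - -(r * c) = b * (c - r * (b - r)) := by ring
  rw [hdet]
  constructor
  · rintro ⟨hr, hb, hc⟩
    exact ⟨by linarith, by nlinarith, mul_pos hb (by nlinarith)⟩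
  · rintro ⟨hrb, hrc, hdet⟩
    have hr : r < 0 := by
      by_contra! hr
      have hc : c < 0 := by nlinarith
      nlinarith [mul_nonneg hr (sub_pos.2 hrb).le]
    have hc : 0 < c := by nlinarith
    refine ⟨hr, ?_, hc⟩
    by_contra! hb
    nlinarith [mul_pos_of_neg_of_neg hr (sub_neg.2 hrb)]

theorem cubic_routh_hurwitz (a1 a2 a3 : ℝ) :
    (∀ z : ℂ, (X ^ 3 + C (a1 : ℂ) * X ^ 2 + C (a2 : ℂ) * X + C (a3 : ℂ)).IsRoot z → z.re < 0) ↔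
      (0 < a1 ∧ 0 < a3 ∧ 0 < a1 * a2 - a3) := by
  obtain ⟨r, b, c, rfl, rfl, rfl⟩ := exists_cubic_coeffs_eq_of_real_root a1 a2 a3
  change IsHurwitzStable _ ↔ _
  push_cast
  rw [← X_sub_C_mul_quadratic, isHurwitzStable_mul_iff, isHurwitzStable_X_sub_C_iff, ofReal_re,
    isHurwitzStable_quadratic_iff, cubic_hurwitz_conditions_iff]
end

section
/- A monic real quartic polynomial s^4 + a1*s^3 + a2*s^2 + a3*s + a4 has all its complex roots with strictly negative real part if and only if a1 > 0, a1*a2 - a3 > 0, a4 > 0, and (a1*a2 - a3)*a3 - a1^2*a4 > 0. -/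
/-!
Over `ℝ` a monic quartic factors as `(s² + b s + c)(s² + d s + e)`, and a real monic
quadratic has both roots in the open left half-plane iff its two coefficients are positive.
Stability is therefore `b, c, d, e > 0`. In these variables `a₁a₂ - a₃ = bc + de + bd(b + d)` and
`(a₁a₂ - a₃)a₃ - a₁²a₄ = bd((c - e)² + (b + d)(be + cd))`, which makes the Hurwitz conditions
visibly equivalent to positivity of `b, c, d, e`.
-/

open Polynomial Complex

namespace Polynomial

theorem Monic.eq_X_sq_add_C_mul_X_add_C {R : Type*} [Semiring R] {Q : R[X]} (hQ : Q.Monic)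
    (h : Q.natDegree = 2) : Q = X ^ 2 + C (Q.coeff 1) * X + C (Q.coeff 0) := by
  have h2 : Q.coeff 2 = 1 := h ▸ hQ.coeff_natDegree
  conv_lhs => rw [Q.as_sum_range_C_mul_X_pow' (n := 3) (by omega)]
  simp only [Finset.sum_range_succ, Finset.range_one, Finset.sum_singleton, pow_zero, mul_one,
    pow_one, h2, map_one, one_mul]
  abel

theorem exists_isRoot_or_monic_quadratic_dvd {P : ℝ[X]} (hP : 0 < P.natDegree) :
    (∃ r : ℝ, P.IsRoot r) ∨ ∃ Q : ℝ[X], Q.Monic ∧ Q.natDegree = 2 ∧ Q ∣ P := by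
  obtain ⟨z, hz⟩ :=
    IsAlgClosed.exists_aeval_eq_zero ℂ P (natDegree_pos_iff_degree_pos.mp hP).ne'
  by_cases him : z.im = 0
  · lift z to ℝ using him
    refine .inl ⟨z, ?_⟩
    rw [IsRoot.def]
    exact ofReal_eq_zero.mp ((aeval_ofReal (K := ℂ) P z).symm.trans hz)
  · exact .inr ⟨_, by monicity!, by compute_degree!,
      quadratic_dvd_of_aeval_eq_zero_im_ne_zero P hz him⟩

theorem exists_monic_quadratic_dvd {P : ℝ[X]} (hP : 2 ≤ P.natDegree) :
    ∃ Q : ℝ[X], Q.Monic ∧ Q.natDegree = 2 ∧ Q ∣ P := by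
  rcases exists_isRoot_or_monic_quadratic_dvd (by omega : 0 < P.natDegree) with ⟨r, hr⟩ | hQ
  · obtain ⟨R, rfl⟩ := dvd_iff_isRoot.mpr hr
    have hR : 0 < R.natDegree := by
      have := natDegree_mul_le (p := X - C r) (q := R)
      rw [natDegree_X_sub_C] at this
      omega
    rcases exists_isRoot_or_monic_quadratic_dvd hR with ⟨s, hs⟩ | ⟨Q, hQ, hQ2, hQR⟩
    · obtain ⟨S, rfl⟩ := dvd_iff_isRoot.mpr hs
      exact ⟨(X - C r) * (X - C s), by monicity!, by compute_degree!, ⟨S, by ring⟩⟩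
    · exact ⟨Q, hQ, hQ2, hQR.mul_left _⟩
  · exact hQ

theorem exists_eq_mul_of_monic_quartic {P : ℝ[X]} (hP : P.Monic) (h4 : P.natDegree = 4) :
    ∃ b c d e : ℝ, P = (X ^ 2 + C b * X + C c) * (X ^ 2 + C d * X + C e) := by
  obtain ⟨Q, hQ, hQ2, R, rfl⟩ :=
    exists_monic_quadratic_dvd (h4 ▸ by norm_num : 2 ≤ P.natDegree)
  have hR : R.Monic := hQ.of_mul_monic_left hP
  have hR2 : R.natDegree = 2 := by rw [hQ.natDegree_mul hR, hQ2] at h4; omega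
  refine ⟨Q.coeff 1, Q.coeff 0, R.coeff 1, R.coeff 0, ?_⟩
  rw [← hQ.eq_X_sq_add_C_mul_X_add_C hQ2, ← hR.eq_X_sq_add_C_mul_X_add_C hR2]

end Polynomial

theorem exists_quartic_coeffs_eq_quadratic_product (a1 a2 a3 a4 : ℝ) :
    ∃ b c d e : ℝ, a1 = b + d ∧ a2 = c + e + b * d ∧ a3 = b * e + c * d ∧ a4 = c * e := by
  obtain ⟨b, c, d, e, h⟩ := exists_eq_mul_of_monic_quartic
    (P := X ^ 4 + C a1 * X ^ 3 + C a2 * X ^ 2 + C a3 * X + C a4) (by monicity!) (by compute_degree!)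
  replace h : X ^ 4 + C a1 * X ^ 3 + C a2 * X ^ 2 + C a3 * X + C a4 =
      X ^ 4 + C (b + d) * X ^ 3 + C (c + e + b * d) * X ^ 2 + C (b * e + c * d) * X
        + C (c * e) := by
    rw [h]; simp only [map_add, map_mul]; ring
  refine ⟨b, c, d, e, ?_, ?_, ?_, ?_⟩
  · simpa [-map_add, -map_mul, coeff_X, coeff_C, coeff_X_pow] using congrArg (coeff · 3) h
  · simpa [-map_add, -map_mul, coeff_X, coeff_C, coeff_X_pow] using congrArg (coeff · 2) h
  · simpa [-map_add, -map_mul, coeff_X, coeff_C, coeff_X_pow] using congrArg (coeff · 1) h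
  · simpa [-map_add, -map_mul, coeff_X, coeff_C, coeff_X_pow] using congrArg (coeff · 0) h

theorem Complex.sq_add_mul_add_eq_zero_iff {b c : ℝ} {z : ℂ} :
    z ^ 2 + b * z + c = 0 ↔
      z.re ^ 2 - z.im ^ 2 + b * z.re + c = 0 ∧ z.im * (2 * z.re + b) = 0 := by
  rw [Complex.ext_iff]
  simp only [add_re, add_im, sq, mul_re, mul_im, ofReal_re, ofReal_im, zero_re, zero_im]
  constructor <;> rintro ⟨h1, h2⟩ <;>
    exact ⟨by linear_combination h1, by linear_combination h2⟩

theorem Complex.re_neg_of_sq_add_mul_add_eq_zero {b c : ℝ} (hb : 0 < b) (hc : 0 < c) {z : ℂ}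
    (hz : z ^ 2 + b * z + c = 0) : z.re < 0 := by
  obtain ⟨hre, him⟩ := sq_add_mul_add_eq_zero_iff.mp hz
  rcases mul_eq_zero.mp him with h | h
  · nlinarith [sq_nonneg z.re]
  · linarith

theorem quadratic_roots_re_neg_iff (b c : ℝ) :
    (∀ z : ℂ, z ^ 2 + b * z + c = 0 → z.re < 0) ↔ 0 < b ∧ 0 < c := by
  refine ⟨fun h => ?_, fun ⟨hb, hc⟩ z hz => re_neg_of_sq_add_mul_add_eq_zero hb hc hz⟩
  obtain ⟨s, hs⟩ := IsAlgClosed.exists_eq_mul_self (discrim 1 (b : ℂ) c)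
  obtain ⟨u, hu⟩ := exists_quadratic_eq_zero one_ne_zero ⟨s, hs⟩
  replace hu : u ^ 2 + b * u + c = 0 := by linear_combination hu
  have hu_neg := h u hu
  obtain ⟨hre, him⟩ := sq_add_mul_add_eq_zero_iff.mp hu
  rcases mul_eq_zero.mp him with h0 | h0
  · -- `u` is real, and so is the other root `-b - u`
    have hv_neg := h (-b - u) (by linear_combination hu)
    simp only [sub_re, neg_re, ofReal_re, sub_neg] at hv_neg
    constructor <;> nlinarith
  · constructor <;> nlinarith

theorem quadratic_factors_pos_iff_hurwitz (b c d e : ℝ) :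
    (0 < b ∧ 0 < c) ∧ (0 < d ∧ 0 < e) ↔
      0 < b + d ∧ 0 < (b + d) * (c + e + b * d) - (b * e + c * d) ∧ 0 < c * e ∧
        0 < ((b + d) * (c + e + b * d) - (b * e + c * d)) * (b * e + c * d)
          - (b + d) ^ 2 * (c * e) := by
  have hΔ2 : (b + d) * (c + e + b * d) - (b * e + c * d) = b * c + d * e + b * d * (b + d) := by
    ring
  have hΔ3 : (b * c + d * e + b * d * (b + d)) * (b * e + c * d) - (b + d) ^ 2 * (c * e)
      = b * d * ((c - e) ^ 2 + (b + d) * (b * e + c * d)) := by ring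
  rw [hΔ2]
  constructor
  · rintro ⟨⟨hb, hc⟩, hd, he⟩
    rw [hΔ3]
    exact ⟨by positivity, by positivity, by positivity, by positivity⟩
  · rintro ⟨h1, h2, h3, h4⟩
    have ha3 : 0 < b * e + c * d :=
      pos_of_mul_pos_right (by nlinarith [mul_pos (pow_pos h1 2) h3]) h2.le
    have hbd : 0 < b * d := pos_of_mul_pos_left (hΔ3 ▸ h4) (by positivity)
    obtain ⟨hb, hd⟩ : 0 < b ∧ 0 < d :=
      (pos_and_pos_or_neg_and_neg_of_mul_pos hbd).resolve_right fun ⟨hb, hd⟩ => by linarith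
    rcases pos_and_pos_or_neg_and_neg_of_mul_pos h3 with ⟨hc, he⟩ | ⟨hc, he⟩
    · exact ⟨⟨hb, hc⟩, hd, he⟩
    · nlinarith [mul_neg_of_pos_of_neg hb he, mul_neg_of_neg_of_pos hc hd]

theorem quartic_routh_hurwitz (a1 a2 a3 a4 : ℝ) :
    (∀ z : ℂ, (X ^ 4 + C (a1 : ℂ) * X ^ 3 + C (a2 : ℂ) * X ^ 2 + C (a3 : ℂ) * X + C (a4 : ℂ)).IsRoot z → z.re < 0) ↔
      (0 < a1 ∧ 0 < a1 * a2 - a3 ∧ 0 < a4 ∧ 0 < (a1 * a2 - a3) * a3 - a1 ^ 2 * a4) := by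
  obtain ⟨b, c, d, e, rfl, rfl, rfl, rfl⟩ :=
    exists_quartic_coeffs_eq_quadratic_product a1 a2 a3 a4
  have hroot (z : ℂ) :
      (X ^ 4 + C ((b + d : ℝ) : ℂ) * X ^ 3 + C ((c + e + b * d : ℝ) : ℂ) * X ^ 2
          + C ((b * e + c * d : ℝ) : ℂ) * X + C ((c * e : ℝ) : ℂ)).IsRoot z ↔
        z ^ 2 + b * z + c = 0 ∨ z ^ 2 + d * z + e = 0 := by
    rw [IsRoot.def, ← mul_eq_zero]
    congr! 1
    simp only [eval_add, eval_mul, eval_pow, eval_C, eval_X]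
    push_cast
    ring
  simp only [hroot, or_imp, forall_and, quadratic_roots_re_neg_iff]
  exact quadratic_factors_pos_iff_hurwitz b c d e
end

section
/- A monic complex quadratic polynomial s^2 + (a1 + i*b1)*s + (a2 + i*b2) has both roots in the open left half-plane if and only if a1 > 0 and a1^2*a2 - a1*a3' + a1*b1*b2 - b2^2 > 0 where a3' = 0; i.e., if and only if a1 > 0 and a1^2*a2 + a1*b1*b2 - b2^2 > 0. -/
/-!
Write the roots of the quadratic as `z = x₁ + i y₁` and `w = x₂ + i y₂`. By Vieta,
`a₁ = -(x₁ + x₂)`, and the Hurwitz expression factors as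
`a₁² a₂ + a₁ b₁ b₂ - b₂² = x₁ x₂ ((x₁ + x₂)² + (y₁ - y₂)²)`.
So both conditions say `x₁ + x₂ < 0` and `x₁ x₂ > 0`, i.e. `x₁ < 0` and `x₂ < 0`.
-/

open Polynomial Complex

theorem quadratic_eq_zero_iff_eq_or_eq {R : Type*} [CommRing R] [NoZeroDivisors R] {x z w : R} :
    x ^ 2 + -(z + w) * x + z * w = 0 ↔ x = z ∨ x = w := by
  rw [show x ^ 2 + -(z + w) * x + z * w = (x - z) * (x - w) by ring, mul_eq_zero, sub_eq_zero,
    sub_eq_zero]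

theorem neg_and_neg_iff_neg_add_pos_and_mul_pos (x₁ x₂ t : ℝ) :
    x₁ < 0 ∧ x₂ < 0 ↔ 0 < -(x₁ + x₂) ∧ 0 < x₁ * x₂ * ((x₁ + x₂) ^ 2 + t ^ 2) := by
  constructor
  · rintro ⟨h₁, h₂⟩
    have hsum : x₁ + x₂ < 0 := by linarith
    exact ⟨by linarith, mul_pos (mul_pos_of_neg_of_neg h₁ h₂) (by nlinarith)⟩
  · rintro ⟨hsum, hprod⟩
    have hsq : 0 < (x₁ + x₂) ^ 2 + t ^ 2 := by nlinarith
    have hx : 0 < x₁ * x₂ := pos_of_mul_pos_left hprod hsq.le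
    constructor <;> nlinarith

def hurwitzDet (c d : ℂ) : ℝ :=
  c.re ^ 2 * d.re + c.re * c.im * d.im - d.im ^ 2

theorem hurwitzDet_neg_add_mul (z w : ℂ) :
    hurwitzDet (-(z + w)) (z * w) = z.re * w.re * ((z.re + w.re) ^ 2 + (z.im - w.im) ^ 2) := by
  simp only [hurwitzDet, neg_re, neg_im, add_re, add_im, mul_re, mul_im]
  ring

theorem forall_isRoot_quadratic_re_neg_iff (c d : ℂ) :
    (∀ z : ℂ, (X ^ 2 + C c * X + C d).IsRoot z → z.re < 0) ↔ 0 < c.re ∧ 0 < hurwitzDet c d := by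
  have hroot (x : ℂ) : (X ^ 2 + C c * X + C d).IsRoot x ↔ x ^ 2 + c * x + d = 0 := by simp
  have hdeg : (X ^ 2 + C c * X + C d).degree = 2 := by compute_degree!
  obtain ⟨z, hz⟩ := IsAlgClosed.exists_root _ (by rw [hdeg]; decide)
  obtain ⟨w, rfl, rfl⟩ : ∃ w, c = -(z + w) ∧ d = z * w :=
    ⟨-c - z, by ring, by linear_combination (hroot z).mp hz⟩
  simp_rw [hroot, quadratic_eq_zero_iff_eq_or_eq, forall_eq_or_imp, forall_eq, hurwitzDet_neg_add_mul,
    neg_and_neg_iff_neg_add_pos_and_mul_pos z.re w.re (z.im - w.im), neg_re, add_re]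

theorem quadratic_complex_routh_hurwitz (a1 b1 a2 b2 : ℝ) :
    (∀ z : ℂ, (X ^ 2 + C ((a1 : ℂ) + (b1 : ℂ) * I) * X + C ((a2 : ℂ) + (b2 : ℂ) * I)).IsRoot z → z.re < 0) ↔
      (0 < a1 ∧ 0 < a1 ^ 2 * a2 + a1 * b1 * b2 - b2 ^ 2) := by
  rw [forall_isRoot_quadratic_re_neg_iff]
  simp [hurwitzDet]
end

section
/- Let k, ω, Ω, k_p, k_I be real with the conditions 2kω > 0, 2kω[2kω(ω² − Ω² − k_p) + k_I] > 0, and −8k_I²kωΩ² − k_I[2kω(ω² − Ω² − k_p) + k_I]² > 0 all satisfied. Then the 3×3 complex matrix A = [[0,1,0],[k_p + Ω² − ω², −(2kω + 2iΩ), k_I],[1,0,0]] is stable: every eigenvalue λ of A satisfies Re(λ) < 0. -/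
/-!
The characteristic polynomial of the matrix is the complex cubic
`s ^ 3 + (A + B i) s ^ 2 + b s + c` with `A = 2kω`, `B = 2Ω`, `b = ω² - Ω² - kp`, `c = -kI`,
and the hypotheses are the Hurwitz conditions `0 < A`, `0 < A b - c`, `0 < c` and
`A B² c < (A b - c) ²`. Writing a root as `x + y i`, its real and imaginary parts give two real
equations in `x, y`; eliminating `y` leaves a polynomial of degree 9 in `x` whose coefficients are
all positive under the Hurwitz conditions, so it has no root with `x ≥ 0`.
-/

open Complex

theorem Matrix.mem_spectrum_iff_cubic {K : Type*} [Field K] (a b c z : K) :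
    z ∈ spectrum K !![0, 1, 0; a, b, c; 1, 0, 0] ↔ z ^ 3 - b * z ^ 2 - a * z - c = 0 := by
  have hdet : (algebraMap K (Matrix (Fin 3) (Fin 3) K) z - !![0, 1, 0; a, b, c; 1, 0, 0]).det
      = z ^ 3 - b * z ^ 2 - a * z - c := by
    simp only [Algebra.algebraMap_eq_smul_one, Matrix.det_fin_three, Matrix.sub_apply,
      Matrix.smul_apply, Matrix.one_apply_eq, Matrix.one_apply_ne, ne_eq, Fin.reduceEq,
      not_false_eq_true, smul_eq_mul, Matrix.of_apply, Matrix.cons_val', Matrix.cons_val_zero,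
      Matrix.cons_val_one, Matrix.cons_val, Matrix.cons_val_fin_one]
    ring
  rw [spectrum.mem_iff, Matrix.isUnit_iff_isUnit_det, isUnit_iff_ne_zero, not_not, hdet]

theorem cubic_re_im_eq_zero (A B b c : ℝ) (z : ℂ)
    (hz : z ^ 3 + (A + B * I) * z ^ 2 + b * z + c = 0) :
    z.re ^ 3 - 3 * z.re * z.im ^ 2 + A * (z.re ^ 2 - z.im ^ 2) - 2 * B * z.re * z.im
        + b * z.re + c = 0 ∧
      3 * z.re ^ 2 * z.im - z.im ^ 3 + B * (z.re ^ 2 - z.im ^ 2) + 2 * A * z.re * z.im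
        + b * z.im = 0 := by
  have hre := congrArg Complex.re hz
  have him := congrArg Complex.im hz
  simp only [pow_succ, pow_zero, one_mul, add_re, mul_re, mul_im, ofReal_re, I_re, mul_zero,
    ofReal_im, I_im, mul_one, sub_self, add_zero, add_im, zero_add, zero_mul, sub_zero, zero_re,
    zero_im] at hre him
  constructor
  · linear_combination hre
  · linear_combination him

/-- The resultant with respect to `y` of the real and imaginary parts of
`(x + y i) ^ 3 + (A + B i) (x + y i) ^ 2 + b (x + y i) + c`. -/
def cubicReResultant (A B b c x : ℝ) : ℝ :=
  c * ((A * b - c) ^ 2 - A * B ^ 2 * c)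
    + (4 * A ^ 3 * b * c + A ^ 2 * b ^ 3 - 4 * A ^ 2 * c ^ 2 + 2 * A * b ^ 2 * c - B ^ 2 * c ^ 2
        - 3 * b * c ^ 2) * x
    + (4 * A ^ 4 * c + 5 * A ^ 3 * b ^ 2 + 4 * A ^ 2 * B ^ 2 * c + 18 * A ^ 2 * b * c
        + A * B ^ 2 * b ^ 2 + 4 * A * b ^ 3 - 15 * A * c ^ 2) * x ^ 2
    + (8 * A ^ 4 * b + 28 * A ^ 3 * c + 8 * A ^ 2 * B ^ 2 * b + 29 * A ^ 2 * b ^ 2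
        + 12 * A * B ^ 2 * c + 26 * A * b * c + B ^ 2 * b ^ 2 + 4 * b ^ 3 - 15 * c ^ 2) * x ^ 3
    + (4 * A ^ 5 + 8 * A ^ 3 * B ^ 2 + 60 * A ^ 3 * b + 76 * A ^ 2 * c + 4 * A * B ^ 4
        + 28 * A * B ^ 2 * b + 56 * A * b ^ 2 + 4 * B ^ 2 * c + 12 * b * c) * x ^ 4
    + (36 * A ^ 4 + 40 * A ^ 2 * B ^ 2 + 168 * A ^ 2 * b + 96 * A * c + 4 * B ^ 4
        + 24 * B ^ 2 * b + 36 * b ^ 2) * x ^ 5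
    + (128 * A ^ 3 + 64 * A * B ^ 2 + 208 * A * b + 48 * c) * x ^ 6
    + (224 * A ^ 2 + 32 * B ^ 2 + 96 * b) * x ^ 7
    + 192 * A * x ^ 8
    + 64 * x ^ 9

theorem cubicReResultant_eq_zero {A B b c x y : ℝ}
    (hre : x ^ 3 - 3 * x * y ^ 2 + A * (x ^ 2 - y ^ 2) - 2 * B * x * y + b * x + c = 0)
    (him : 3 * x ^ 2 * y - y ^ 3 + B * (x ^ 2 - y ^ 2) + 2 * A * x * y + b * y = 0) :
    cubicReResultant A B b c x = 0 := by
  unfold cubicReResultant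
  linear_combination
    (64*x^6 + 128*x^5*A + 96*x^4*A^2 + 8*x^4*B^2 + 32*x^4*b + 32*x^3*A^3 + 12*x^3*A*B^2 +
        48*x^3*A*b - 16*x^3*c + 4*x^2*A^4 + 4*x^2*A^2*B^2 + 24*x^2*A^2*b - 16*x^2*A*c + x^2*B^2*b
        + 4*x^2*b^2 + 4*x*A^3*b - 4*x*A^2*c + x*A*B^2*b + 4*x*A*b^2 - x*B^2*c - 4*x*b*c +
        A^2*b^2 - A*B^2*c - 2*A*b*c + c^2 - 16*x^4*B*y - 28*x^3*A*B*y - 14*x^2*A^2*B*y -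
        2*x^2*B^3*y - 7*x^2*B*b*y - 2*x*A^3*B*y - 2*x*A*B^3*y - 6*x*A*B*b*y + 2*x*B*c*y -
        A^2*B*b*y - 24*x^4*y^2 - 32*x^3*A*y^2 - 14*x^2*A^2*y^2 - 2*x^2*B^2*y^2 - 6*x^2*b*y^2 -
        2*x*A^3*y^2 - 2*x*A*B^2*y^2 - 5*x*A*b*y^2 + 3*x*c*y^2 - A^2*b*y^2 + A*c*y^2) * hre
    + (24*x^5*B + 44*x^4*A*B + 24*x^3*A^2*B + 4*x^3*B^3 + 15*x^3*B*b + 4*x^2*A^3*B + 4*x^2*A*B^3 +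
        14*x^2*A*B*b - 3*x^2*B*c + 3*x*A^2*B*b + 2*x*A*B*c + A^2*B*c + 72*x^5*y + 120*x^4*A*y +
        74*x^3*A^2*y + 6*x^3*B^2*y + 18*x^3*b*y + 20*x^2*A^3*y + 8*x^2*A*B^2*y + 21*x^2*A*b*y -
        9*x^2*c*y + 2*x*A^4*y + 2*x*A^2*B^2*y + 8*x*A^2*b*y - 6*x*A*c*y + A^3*b*y - A^2*c*y) * him

theorem cubicReResultant_pos {A B b c x : ℝ} (hA : 0 < A) (hD : c < A * b) (hc : 0 < c)
    (hH : A * B ^ 2 * c < (A * b - c) ^ 2) (hx : 0 ≤ x) :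
    0 < cubicReResultant A B b c x := by
  have hb : 0 < b := pos_of_mul_pos_right (hc.trans hD) hA.le
  have hAbc : 0 < A * b - c := sub_pos.2 hD
  have coeff0 : 0 < c * ((A * b - c) ^ 2 - A * B ^ 2 * c) := mul_pos hc (sub_pos.2 hH)
  -- multiplying by `A` and bounding `A B² c²` by `c (A b - c)²` leaves
  -- `4 A³ c (A b - c) + (A b - c) (A b + c)²`
  have coeff1 : 0 ≤ 4 * A ^ 3 * b * c + A ^ 2 * b ^ 3 - 4 * A ^ 2 * c ^ 2 + 2 * A * b ^ 2 * c
      - B ^ 2 * c ^ 2 - 3 * b * c ^ 2 := by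
    refine (pos_of_mul_pos_right ?_ hA.le).le
    nlinarith [mul_lt_mul_of_pos_left hH hc, mul_pos (mul_pos (pow_pos hA 3) hc) hAbc,
      mul_pos hAbc (pow_pos (add_pos (mul_pos hA hb) hc) 2)]
  -- in this coefficient and the next, the negative `c²` term is absorbed using `c² < (A b)²`
  have coeff2 : 0 ≤ 4 * A ^ 4 * c + 5 * A ^ 3 * b ^ 2 + 4 * A ^ 2 * B ^ 2 * c + 18 * A ^ 2 * b * c
      + A * B ^ 2 * b ^ 2 + 4 * A * b ^ 3 - 15 * A * c ^ 2 := by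
    nlinarith [mul_pos hA (mul_pos hAbc (add_pos (mul_pos hA hb) hc)), mul_pos (pow_pos hA 4) hc,
      mul_pos (pow_pos hA 2) (mul_pos hb hc),
      mul_nonneg (mul_nonneg (sq_nonneg A) (sq_nonneg B)) hc.le,
      mul_nonneg (mul_nonneg hA.le (sq_nonneg B)) (sq_nonneg b), mul_pos hA (pow_pos hb 3)]
  have coeff3 : 0 ≤ 8 * A ^ 4 * b + 28 * A ^ 3 * c + 8 * A ^ 2 * B ^ 2 * b + 29 * A ^ 2 * b ^ 2
      + 12 * A * B ^ 2 * c + 26 * A * b * c + B ^ 2 * b ^ 2 + 4 * b ^ 3 - 15 * c ^ 2 := by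
    nlinarith [mul_pos hAbc (add_pos (mul_pos hA hb) hc), mul_pos (pow_pos hA 4) hb,
      mul_pos (pow_pos hA 3) hc, mul_nonneg (mul_nonneg (sq_nonneg A) (sq_nonneg B)) hb.le,
      mul_nonneg (mul_nonneg hA.le (sq_nonneg B)) hc.le, mul_pos (mul_pos hA hb) hc,
      mul_nonneg (sq_nonneg B) (sq_nonneg b), pow_pos hb 3]
  unfold cubicReResultant
  linarith [mul_nonneg coeff1 hx, mul_nonneg coeff2 (pow_nonneg hx 2),
    mul_nonneg coeff3 (pow_nonneg hx 3),
    mul_nonneg (by positivity : (0 : ℝ) ≤ 4 * A ^ 5 + 8 * A ^ 3 * B ^ 2 + 60 * A ^ 3 * b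
      + 76 * A ^ 2 * c + 4 * A * B ^ 4 + 28 * A * B ^ 2 * b + 56 * A * b ^ 2 + 4 * B ^ 2 * c
      + 12 * b * c) (pow_nonneg hx 4),
    mul_nonneg (by positivity : (0 : ℝ) ≤ 36 * A ^ 4 + 40 * A ^ 2 * B ^ 2 + 168 * A ^ 2 * b
      + 96 * A * c + 4 * B ^ 4 + 24 * B ^ 2 * b + 36 * b ^ 2) (pow_nonneg hx 5),
    mul_nonneg (by positivity : (0 : ℝ) ≤ 128 * A ^ 3 + 64 * A * B ^ 2 + 208 * A * b + 48 * c)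
      (pow_nonneg hx 6),
    mul_nonneg (by positivity : (0 : ℝ) ≤ 224 * A ^ 2 + 32 * B ^ 2 + 96 * b) (pow_nonneg hx 7),
    mul_nonneg (by positivity : (0 : ℝ) ≤ 192 * A) (pow_nonneg hx 8),
    mul_nonneg (by positivity : (0 : ℝ) ≤ 64) (pow_nonneg hx 9)]

theorem hurwitz_conditions_of_mul_pos {A B b c : ℝ} (hA : 0 < A)
    (h : 0 < c * ((A * b - c) ^ 2 - A * B ^ 2 * c)) :
    0 < c ∧ A * B ^ 2 * c < (A * b - c) ^ 2 := by
  have hc : 0 < c := by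
    by_contra! hc
    nlinarith [mul_nonneg (mul_nonneg hA.le (sq_nonneg B)) (neg_nonneg.2 hc),
      sq_nonneg (A * b - c)]
  exact ⟨hc, sub_pos.1 (pos_of_mul_pos_right h hc.le)⟩

theorem re_neg_of_cubic_eq_zero {A B b c : ℝ} {z : ℂ} (hA : 0 < A) (hD : c < A * b) (hc : 0 < c)
    (hH : A * B ^ 2 * c < (A * b - c) ^ 2) (hz : z ^ 3 + (A + B * I) * z ^ 2 + b * z + c = 0) :
    z.re < 0 := by
  by_contra! hx
  obtain ⟨hre, him⟩ := cubic_re_im_eq_zero A B b c z hz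
  exact (cubicReResultant_pos hA hD hc hH hx).ne' (cubicReResultant_eq_zero hre him)

theorem rotating_shaft_matrix_stable (k ω Ω kp kI : ℝ)
    (h1 : 0 < 2 * k * ω)
    (h2 : 0 < 2 * k * ω * (2 * k * ω * (ω ^ 2 - Ω ^ 2 - kp) + kI))
    (h3 : 0 < -8 * kI ^ 2 * k * ω * Ω ^ 2 - kI * (2 * k * ω * (ω ^ 2 - Ω ^ 2 - kp) + kI) ^ 2) :
    ∀ lam ∈ spectrum ℂ
        (!![0, 1, 0;
            ((kp + Ω ^ 2 - ω ^ 2 : ℝ) : ℂ), -((2 * k * ω : ℝ) + 2 * (Ω : ℂ) * I), (kI : ℂ);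
            1, 0, 0] : Matrix (Fin 3) (Fin 3) ℂ),
      lam.re < 0 := by
  intro lam hlam
  have hchar : lam ^ 3 + ((2 * k * ω : ℝ) + (2 * Ω : ℝ) * I) * lam ^ 2
      + (ω ^ 2 - Ω ^ 2 - kp : ℝ) * lam + (-kI : ℝ) = 0 := by
    have h := (Matrix.mem_spectrum_iff_cubic _ _ _ lam).1 hlam
    push_cast at h ⊢
    linear_combination h
  have hD : -kI < 2 * k * ω * (ω ^ 2 - Ω ^ 2 - kp) := by
    linarith [pos_of_mul_pos_right h2 h1.le]
  obtain ⟨hc, hH⟩ := hurwitz_conditions_of_mul_pos (B := 2 * Ω) (b := ω ^ 2 - Ω ^ 2 - kp)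
    (c := -kI) h1 (by linear_combination h3)
  exact re_neg_of_cubic_eq_zero h1 hD hc hH hchar
end

section
/- A monic complex quadratic polynomial s^2 + (a1 + i b1)s + (a2 + i b2) has all roots in the open left half-plane if and only if a1 > 0 and a1²a2 + a1 b1 b2 − b2² > 0. -/
/-!
Write the roots as `z, w`, so that `a1 + i b1 = -(z + w)` and `a2 + i b2 = z w` (Vieta).
Then `a1 = -(Re z + Re w)` and
`a1² a2 + a1 b1 b2 - b2² = Re z · Re w · ((Re z + Re w)² + (Im z - Im w)²)`,
so both real parts are negative iff `a1 > 0` and the product `Re z · Re w` is positive.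
-/

open Polynomial Complex

theorem IsAlgClosed.exists_add_eq_neg_and_mul_eq {K : Type*} [Field K] [IsAlgClosed K] (b c : K) :
    ∃ z w : K, z + w = -b ∧ z * w = c := by
  obtain ⟨z, hz⟩ := IsAlgClosed.exists_root (X ^ 2 + C b * X + C c)
    (by rw [show (X ^ 2 + C b * X + C c : K[X]).degree = 2 by compute_degree!]; decide)
  refine ⟨z, -b - z, by ring, ?_⟩
  simp only [IsRoot, eval_add, eval_pow, eval_mul, eval_X, eval_C] at hz
  linear_combination -hz

theorem isRoot_quadratic_iff {R : Type*} [CommRing R] [IsDomain R] {b c z w : R}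
    (hsum : z + w = -b) (hprod : z * w = c) (s : R) :
    (X ^ 2 + C b * X + C c).IsRoot s ↔ s = z ∨ s = w := by
  have hfactor : s ^ 2 + b * s + c = (s - z) * (s - w) := by
    linear_combination s * hsum - hprod
  simp only [IsRoot, eval_add, eval_pow, eval_mul, eval_X, eval_C, hfactor, mul_eq_zero,
    sub_eq_zero]

theorem neg_and_neg_iff_add_neg_and_mul_pos {x u t : ℝ} (ht : 0 ≤ t) :
    x < 0 ∧ u < 0 ↔ x + u < 0 ∧ 0 < x * u * ((x + u) ^ 2 + t) := by
  constructor
  · rintro ⟨hx, hu⟩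
    exact ⟨by linarith, mul_pos (mul_pos_of_neg_of_neg hx hu) (by nlinarith)⟩
  · rintro ⟨hxu, hpos⟩
    have hxu_pos : 0 < x * u := pos_of_mul_pos_left hpos (by positivity)
    constructor <;> nlinarith

theorem Complex.re_neg_and_re_neg_iff (z w : ℂ) :
    z.re < 0 ∧ w.re < 0 ↔ 0 < (-(z + w)).re ∧
      0 < (-(z + w)).re ^ 2 * (z * w).re + (-(z + w)).re * (-(z + w)).im * (z * w).im -
        (z * w).im ^ 2 := by
  have hidentity : (-(z + w)).re ^ 2 * (z * w).re + (-(z + w)).re * (-(z + w)).im * (z * w).im -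
      (z * w).im ^ 2 = z.re * w.re * ((z.re + w.re) ^ 2 + (z.im - w.im) ^ 2) := by
    simp only [neg_re, neg_im, add_re, add_im, mul_re, mul_im]
    ring
  rw [hidentity, neg_and_neg_iff_add_neg_and_mul_pos (sq_nonneg _), neg_re, add_re, neg_pos]

theorem quadratic_complex_RH (a1 b1 a2 b2 : ℝ) :
    (∀ z : ℂ, (X ^ 2 + C ((a1 : ℂ) + (b1 : ℂ) * I) * X + C ((a2 : ℂ) + (b2 : ℂ) * I)).IsRoot z → z.re < 0) ↔
      (0 < a1 ∧ 0 < a1 ^ 2 * a2 + a1 * b1 * b2 - b2 ^ 2) := by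
  obtain ⟨z, w, hsum, hprod⟩ :=
    IsAlgClosed.exists_add_eq_neg_and_mul_eq ((a1 : ℂ) + (b1 : ℂ) * I) ((a2 : ℂ) + (b2 : ℂ) * I)
  have hroots : (∀ s : ℂ, (X ^ 2 + C ((a1 : ℂ) + (b1 : ℂ) * I) * X +
      C ((a2 : ℂ) + (b2 : ℂ) * I)).IsRoot s → s.re < 0) ↔ z.re < 0 ∧ w.re < 0 := by
    simp only [isRoot_quadratic_iff hsum hprod, forall_eq_or_imp, forall_eq]
  rw [hroots, Complex.re_neg_and_re_neg_iff, hsum, neg_neg, hprod]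
  simp
end
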